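/- arXiv:math/0606675 — 7 statements merged into one kernel-verified Lean document; each statement's English description precedes it below -/
import Mathlib

section
/- Let n ≥ 1, k ≥ 1, p₀ ∈ ℝ^{n+1} and R₀ > 1. Then there exists σ₀ > 0 such that for every σ ≥ σ₀ and every ε ∈ (0,1], the radial function Φ(x) := σ(k+1)^{-1}(R₀^{k+1} − |x−p₀|^{k+1}) satisfies the supersolution inequality div(∇Φ/√(ε² + |∇Φ|²))(x) ≤ −(ε² + |∇Φ(x)|²)^{−1/(2k)} at every point x with 1 ≤ |x−p₀| ≤ R₀. -/
open MeasureTheory Metric Set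

/-- The divergence of a vector field `F` on `ℝ^{n+1}`: the trace of its Fréchet derivative. -/
noncomputable def vdiv {n : ℕ}
    (F : EuclideanSpace ℝ (Fin (n + 1)) → EuclideanSpace ℝ (Fin (n + 1)))
    (x : EuclideanSpace ℝ (Fin (n + 1))) : ℝ :=
  LinearMap.trace ℝ (EuclideanSpace ℝ (Fin (n + 1)))
    (fderiv ℝ F x : EuclideanSpace ℝ (Fin (n + 1)) →ₗ[ℝ] EuclideanSpace ℝ (Fin (n + 1)))

/-!
Write `r = |x - p₀|` and `m = n + 1`. For a radial function `ψ(r)` with `ψ' = g`, the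
field `∇Φ / √(ε² + |∇Φ|²)` is `(G(r) / r) (x - p₀)` with `G = g / √(ε² + g²)`, whose
divergence is `(m - 1) G / r + G'`, and `G' = ε² g' / (ε² + g²)^{3/2}`. For
`g = -σ r^k` both terms are negative, and for `m ≥ 2`, `r ≥ 1` the first one alone is at most
`-σ / √D`, `D = ε² + σ² r^{2k}`. Finally `D^{-1/(2k)} ≤ σ / √D` amounts to
`D^{k-1} ≤ σ^{2k}`, which holds once `σ ≥ (2 R₀^{2k})^k`, since then `D ≤ 2 R₀^{2k} σ²`.
-/

open Real InnerProductSpace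

theorem hasDerivAt_div_sqrt_sq_add {ε : ℝ} (hε : ε ≠ 0) (u : ℝ) :
    HasDerivAt (fun u => u / √(ε ^ 2 + u ^ 2)) (ε ^ 2 / √(ε ^ 2 + u ^ 2) ^ 3) u := by
  have hD : 0 < ε ^ 2 + u ^ 2 := by positivity
  have hS : 0 < √(ε ^ 2 + u ^ 2) := sqrt_pos.2 hD
  refine ((hasDerivAt_id' u).div (((hasDerivAt_pow 2 u).const_add (ε ^ 2)).sqrt hD.ne')
    hS.ne').congr_deriv ?_
  have hS2 : √(ε ^ 2 + u ^ 2) ^ 2 = ε ^ 2 + u ^ 2 := sq_sqrt hD.le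
  field_simp
  rw [hS2]
  ring

section Radial

variable {E : Type*} [NormedAddCommGroup E] [InnerProductSpace ℝ E] {p x : E}

theorem hasFDerivAt_norm_sub (hx : x ≠ p) :
    HasFDerivAt (fun y => ‖y - p‖) (‖x - p‖⁻¹ • innerSL ℝ (x - p)) x := by
  have h := ((hasFDerivAt_id x).sub_const p).norm_sq.sqrt (by simpa [sub_eq_zero] using hx)
  simp only [sqrt_sq (norm_nonneg _), id] at h
  convert h using 1
  ext v
  simp
  ring

theorem HasDerivAt.hasGradientAt_comp_norm_sub [CompleteSpace E] {ψ : ℝ → ℝ} {a : ℝ}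
    (hψ : HasDerivAt ψ a ‖x - p‖) (hx : x ≠ p) :
    HasGradientAt (fun y => ψ ‖y - p‖) ((a / ‖x - p‖) • (x - p)) x := by
  rw [hasGradientAt_iff_hasFDerivAt]
  refine (hψ.comp_hasFDerivAt x (hasFDerivAt_norm_sub hx)).congr_fderiv ?_
  ext v
  simp
  ring

theorem HasDerivAt.norm_gradient_comp_norm_sub [CompleteSpace E] {ψ : ℝ → ℝ} {a : ℝ}
    (hψ : HasDerivAt ψ a ‖x - p‖) (hx : x ≠ p) :
    ‖gradient (fun y => ψ ‖y - p‖) x‖ = |a| := by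
  have hr : ‖x - p‖ ≠ 0 := by simpa [sub_eq_zero] using hx
  rw [(hψ.hasGradientAt_comp_norm_sub hx).gradient, norm_smul, norm_div, norm_norm,
    div_mul_cancel₀ _ hr, Real.norm_eq_abs]

theorem HasDerivAt.trace_fderiv_radial_field [FiniteDimensional ℝ E] {G : ℝ → ℝ} {G' : ℝ}
    (hG : HasDerivAt G G' ‖x - p‖) (hx : x ≠ p) :
    LinearMap.trace ℝ E (fderiv ℝ (fun y => (G ‖y - p‖ / ‖y - p‖) • (y - p)) x)
      = (Module.finrank ℝ E - 1) * G ‖x - p‖ / ‖x - p‖ + G' := by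
  have hr : ‖x - p‖ ≠ 0 := by simpa [sub_eq_zero] using hx
  have hprofile : HasFDerivAt (fun y => G ‖y - p‖ / ‖y - p‖) _ x :=
    ((hG.div (hasDerivAt_id' _) hr).comp_hasFDerivAt x (hasFDerivAt_norm_sub hx) :)
  have hfield : HasFDerivAt (fun y => (G ‖y - p‖ / ‖y - p‖) • (y - p)) _ x :=
    (hprofile.smul ((hasFDerivAt_id x).sub_const p) :)
  rw [hfield.fderiv]
  simp only [mul_one, id_eq, ContinuousLinearMap.toLinearMap_add,
    ContinuousLinearMap.toLinearMap_smul, ContinuousLinearMap.coe_id,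
    ContinuousLinearMap.coe_smulRight, ContinuousLinearMap.toLinearMap_innerSL_apply, map_add,
    map_smul, LinearMap.trace_id, smul_eq_mul, LinearMap.trace_smulRight, LinearMap.smul_apply,
    innerₛₗ_apply_apply, real_inner_self_eq_norm_sq]
  field_simp
  ring

theorem HasDerivAt.trace_fderiv_div_sqrt_gradient_radial [FiniteDimensional ℝ E]
    {ψ g : ℝ → ℝ} {g' ε : ℝ} (hε : ε ≠ 0) (hψ : ∀ t > 0, HasDerivAt ψ (g t) t)
    (hg : HasDerivAt g g' ‖x - p‖) (hx : x ≠ p) :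
    LinearMap.trace ℝ E (fderiv ℝ (fun y => (√(ε ^ 2 + ‖gradient (fun z => ψ ‖z - p‖) y‖ ^ 2))⁻¹ •
        gradient (fun z => ψ ‖z - p‖) y) x)
      = (Module.finrank ℝ E - 1) * (g ‖x - p‖ / √(ε ^ 2 + g ‖x - p‖ ^ 2)) / ‖x - p‖
        + ε ^ 2 * g' / √(ε ^ 2 + g ‖x - p‖ ^ 2) ^ 3 := by
  have hG : HasDerivAt (fun t => g t / √(ε ^ 2 + g t ^ 2))
      (ε ^ 2 * g' / √(ε ^ 2 + g ‖x - p‖ ^ 2) ^ 3) ‖x - p‖ :=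
    ((hasDerivAt_div_sqrt_sq_add hε (g ‖x - p‖)).comp _ hg).congr_deriv (by ring)
  rw [← hG.trace_fderiv_radial_field hx]
  congr 2
  refine Filter.EventuallyEq.fderiv_eq ?_
  filter_upwards [eventually_ne_nhds hx] with y hy
  have hr : 0 < ‖y - p‖ := by simpa [sub_eq_zero] using hy
  rw [(hψ _ hr).norm_gradient_comp_norm_sub hy,
    ((hψ _ hr).hasGradientAt_comp_norm_sub hy).gradient, sq_abs, smul_smul]
  congr 1
  ring

end Radial

theorem hasDerivAt_mul_sub_rpow_add_one {σ k R t : ℝ} (hk : k + 1 ≠ 0) (ht : t ≠ 0) :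
    HasDerivAt (fun t => σ / (k + 1) * (R ^ (k + 1) - t ^ (k + 1))) (-(σ * t ^ k)) t := by
  refine (((hasDerivAt_rpow_const (Or.inl ht)).const_sub _).const_mul _).congr_deriv ?_
  rw [add_sub_cancel_right]
  field_simp

theorem barrier_divergence_le_neg_div {m k σ ε r S : ℝ} (hm : 1 ≤ m) (hk : 1 ≤ k) (hr : 1 ≤ r)
    (hσ : 0 ≤ σ) (hS : 0 < S) :
    m * (-(σ * r ^ k) / S) / r + ε ^ 2 * -(σ * (k * r ^ (k - 1))) / S ^ 3 ≤ -(σ / S) := by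
  have hr1 : 1 ≤ r ^ (k - 1) := one_le_rpow hr (by linarith)
  have hradial : m * (-(σ * r ^ k) / S) / r = -(m * r ^ (k - 1) * (σ / S)) := by
    rw [rpow_sub_one (by positivity)]
    field_simp
  have hflux : ε ^ 2 * -(σ * (k * r ^ (k - 1))) / S ^ 3 ≤ 0 :=
    div_nonpos_of_nonpos_of_nonneg
      (mul_nonpos_of_nonneg_of_nonpos (sq_nonneg ε) (neg_nonpos.2 (by positivity))) (by positivity)
  have hgrow : σ / S ≤ m * r ^ (k - 1) * (σ / S) :=
    le_mul_of_one_le_left (by positivity) (by nlinarith)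
  linarith

theorem rpow_neg_inv_le_div_sqrt {D σ k : ℝ} (hD : 0 < D) (hk : k ≠ 0)
    (hσ : D ^ ((k - 1) / (2 * k)) ≤ σ) :
    D ^ (-1 / (2 * k)) ≤ σ / √D := by
  rw [le_div_iff₀ (sqrt_pos.2 hD), sqrt_eq_rpow, ← rpow_add hD]
  rwa [show -1 / (2 * k) + 1 / 2 = (k - 1) / (2 * k) by field_simp; ring]

theorem rpow_le_of_le_mul_sq {D C σ k : ℝ} (hk : 1 ≤ k) (hD0 : 0 ≤ D) (hC0 : 0 ≤ C)
    (hσ : 0 ≤ σ) (hD : D ≤ C * σ ^ 2) (hC : C ^ (k - 1) ≤ σ ^ 2) :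
    D ^ ((k - 1) / (2 * k)) ≤ σ := by
  have hk0 : 0 < 2 * k := by linarith
  rw [div_eq_mul_inv, rpow_mul hD0, rpow_inv_le_iff_of_pos (by positivity) hσ hk0]
  calc D ^ (k - 1) ≤ (C * σ ^ 2) ^ (k - 1) := rpow_le_rpow hD0 hD (by linarith)
    _ = C ^ (k - 1) * (σ ^ 2) ^ (k - 1) := mul_rpow hC0 (sq_nonneg σ)
    _ ≤ σ ^ 2 * (σ ^ 2) ^ (k - 1) := by gcongr
    _ = (σ ^ 2) ^ k := by rw [← rpow_one_add' (sq_nonneg σ) (by linarith)]; ring_nf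
    _ = σ ^ (2 * k) := by rw [← rpow_natCast_mul hσ]; norm_num

theorem sq_add_sq_mul_rpow_le {ε σ r R k : ℝ} (hε : ε ^ 2 ≤ 1) (hσ : 1 ≤ σ) (hr : 0 ≤ r)
    (hrR : r ≤ R) (hR : 1 ≤ R) (hk : 0 ≤ k) :
    ε ^ 2 + (σ * r ^ k) ^ 2 ≤ 2 * (R ^ k) ^ 2 * σ ^ 2 := by
  have hRk : 1 ≤ R ^ k := one_le_rpow hR hk
  have hrk : (σ * r ^ k) ^ 2 ≤ (σ * R ^ k) ^ 2 := by gcongr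
  have hσR : 1 ≤ (σ * R ^ k) ^ 2 := one_le_pow₀ (one_le_mul_of_one_le_of_one_le hσ hRk)
  nlinarith

theorem rpow_sq_add_sq_mul_rpow_le {ε σ r R k : ℝ} (hε : ε ^ 2 ≤ 1) (hr : 0 ≤ r) (hrR : r ≤ R)
    (hR : 1 ≤ R) (hk : 1 ≤ k) (hσ : (2 * (R ^ k) ^ 2) ^ k ≤ σ) :
    (ε ^ 2 + (σ * r ^ k) ^ 2) ^ ((k - 1) / (2 * k)) ≤ σ := by
  have hC : 1 ≤ 2 * (R ^ k) ^ 2 := by nlinarith [one_le_rpow hR (by linarith : 0 ≤ k)]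
  have hσ1 : 1 ≤ σ := (one_le_rpow hC (by linarith)).trans hσ
  have hCσ : (2 * (R ^ k) ^ 2) ^ (k - 1) ≤ σ :=
    (rpow_le_rpow_of_exponent_le hC (by linarith)).trans hσ
  exact rpow_le_of_le_mul_sq hk (by positivity) (by positivity) (by linarith)
    (sq_add_sq_mul_rpow_le hε hσ1 hr hrR hR (by linarith)) (hCσ.trans (by nlinarith))

/-- **Radial supersolution** (from the proof of Lemma 3.1, Euclidean case): for `σ` large
enough (depending on `n`, `k`, `p₀`, `R₀`) and any `ε ∈ (0,1]`, the radial function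
`Φ(x) = σ(k+1)⁻¹(R₀^{k+1} − |x−p₀|^{k+1})` is a supersolution of `(★★)_ε` on the
annulus `1 ≤ |x−p₀| ≤ R₀`. -/
theorem radial_supersolution (n : ℕ) (hn : 1 ≤ n) (k : ℝ) (hk : 1 ≤ k)
    (p₀ : EuclideanSpace ℝ (Fin (n + 1))) (R₀ : ℝ) (hR₀ : 1 < R₀) :
    ∃ σ₀ > (0 : ℝ), ∀ σ : ℝ, σ₀ ≤ σ → ∀ ε : ℝ, ε ∈ Ioc (0 : ℝ) 1 →
      let Φ : EuclideanSpace ℝ (Fin (n + 1)) → ℝ :=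
        fun x => σ / (k + 1) * (R₀ ^ (k + 1) - ‖x - p₀‖ ^ (k + 1));
      ∀ x : EuclideanSpace ℝ (Fin (n + 1)), 1 ≤ ‖x - p₀‖ → ‖x - p₀‖ ≤ R₀ →
        vdiv (fun y => (Real.sqrt (ε ^ 2 + ‖gradient Φ y‖ ^ 2))⁻¹ • gradient Φ y) x
          ≤ -((ε ^ 2 + ‖gradient Φ x‖ ^ 2) ^ (-(1 : ℝ) / (2 * k))) := by
  have hσ₀ : 0 < (2 * (R₀ ^ k) ^ 2) ^ k := by positivity
  refine ⟨_, hσ₀, ?_⟩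
  intro σ hσ ε ⟨hε0, hε1⟩ Φ x hx1 hxR
  set r := ‖x - p₀‖
  have hr : 0 < r := by linarith
  have hx : x ≠ p₀ := by simpa [r, sub_eq_zero] using hr.ne'
  have hψ : ∀ t > 0, HasDerivAt (fun t => σ / (k + 1) * (R₀ ^ (k + 1) - t ^ (k + 1)))
      (-(σ * t ^ k)) t := fun t ht => hasDerivAt_mul_sub_rpow_add_one (by linarith) ht.ne'
  have hg := ((hasDerivAt_rpow_const (p := k) (Or.inl hr.ne')).const_mul σ).neg
  have hD : 0 < ε ^ 2 + (σ * r ^ k) ^ 2 := by positivity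
  refine (HasDerivAt.trace_fderiv_div_sqrt_gradient_radial hε0.ne' hψ hg hx).trans_le ?_
  rw [show ‖gradient Φ x‖ = |-(σ * r ^ k)| from (hψ r hr).norm_gradient_comp_norm_sub hx,
    sq_abs, neg_sq, finrank_euclideanSpace_fin]
  push_cast
  rw [add_sub_cancel_right]
  calc _ ≤ -(σ / √(ε ^ 2 + (σ * r ^ k) ^ 2)) :=
        barrier_divergence_le_neg_div (by exact_mod_cast hn) hk hx1 (hσ₀.le.trans hσ)
          (sqrt_pos.2 hD)
    _ ≤ _ := neg_le_neg (rpow_neg_inv_le_div_sqrt hD (by linarith)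
        (rpow_sq_add_sq_mul_rpow_le (by nlinarith) hr.le hxR hR₀.le hk hσ))
end

section
/- Let n ≥ 1 be a real number, s ≥ 0, and let H : [0, s] → ℝ be differentiable with H(0) > 0 and H'(τ) ≤ −H(τ)²/n for all τ ∈ [0, s]. Then H(s) ≤ n·H(0)/(H(0)·s + n). -/
/-!
Along the interval, `1/H` grows at least as fast as `τ/n`: where `H > 0`,
`(1/H)' = -H'/H² ≥ 1/n`. Integrating from `0` to `s` gives `1/H(s) ≥ 1/H(0) + s/n`, which is the
bound after inversion. Positivity of `H` on `[0, s]` is only needed when `H(s) > 0`, and then it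
follows because `H' ≤ 0` makes `H` antitone; if `H(s) ≤ 0` the bound is trivial.
-/

open Set

section RiccatiInequality

variable {D : Set ℝ} {H H' : ℝ → ℝ} {n : ℝ}

theorem antitoneOn_of_hasDerivWithinAt_le_neg_sq_div (hD : Convex ℝ D) (hn : 0 ≤ n)
    (hderiv : ∀ τ ∈ D, HasDerivWithinAt H (H' τ) D τ)
    (hineq : ∀ τ ∈ D, H' τ ≤ -(H τ) ^ 2 / n) : AntitoneOn H D :=
  antitoneOn_of_hasDerivWithinAt_nonpos hD
    (fun τ hτ => (hderiv τ hτ).continuousWithinAt)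
    (fun τ hτ => (hderiv τ (interior_subset hτ)).mono interior_subset)
    (fun τ hτ => (hineq τ (interior_subset hτ)).trans
      (div_nonpos_of_nonpos_of_nonneg (neg_nonpos.2 (sq_nonneg _)) hn))

theorem monotoneOn_inv_sub_div_of_hasDerivWithinAt_le_neg_sq_div (hD : Convex ℝ D)
    (hderiv : ∀ τ ∈ D, HasDerivWithinAt H (H' τ) D τ) (hpos : ∀ τ ∈ D, 0 < H τ)
    (hineq : ∀ τ ∈ D, H' τ ≤ -(H τ) ^ 2 / n) :
    MonotoneOn (fun τ => (H τ)⁻¹ - τ / n) D := by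
  have hcont : ContinuousOn H D := fun τ hτ => (hderiv τ hτ).continuousWithinAt
  refine monotoneOn_of_hasDerivWithinAt_nonneg hD (f' := fun τ => -H' τ / H τ ^ 2 - 1 / n)
    ((hcont.inv₀ fun τ hτ => (hpos τ hτ).ne').sub (continuousOn_id.div_const n)) ?_ ?_
  · intro τ hτ
    have hτD := interior_subset hτ
    exact (((hderiv τ hτD).mono interior_subset).inv (hpos τ hτD).ne').sub
      (by simpa using (hasDerivWithinAt_id τ _).div_const n)
  · intro τ hτ
    have hτD := interior_subset hτ
    have hH := hpos τ hτD
    have h : H τ ^ 2 / n ≤ -H' τ := by linarith [hineq τ hτD, neg_div n (H τ ^ 2)]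
    rw [sub_nonneg]
    calc 1 / n = H τ ^ 2 / n / H τ ^ 2 := by field_simp
      _ ≤ -H' τ / H τ ^ 2 := by gcongr

end RiccatiInequality

/-- **Riccati comparison for equidistant hypersurfaces** (from the proof of Lemma 6.2):
if `H` is differentiable on `[0, s]` with `H(0) > 0` and `H' ≤ −H²/n`, then
`H(s) ≤ nH(0)/(H(0)s + n)`. -/
theorem riccati_comparison (n : ℝ) (hn : 1 ≤ n) (s : ℝ) (hs : 0 ≤ s) (H H' : ℝ → ℝ)
    (hderiv : ∀ τ ∈ Icc (0 : ℝ) s, HasDerivWithinAt H (H' τ) (Icc (0 : ℝ) s) τ)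
    (h0 : 0 < H 0)
    (hineq : ∀ τ ∈ Icc (0 : ℝ) s, H' τ ≤ -(H τ) ^ 2 / n) :
    H s ≤ n * H 0 / (H 0 * s + n) := by
  have hn0 : 0 < n := one_pos.trans_le hn
  have hmem0 : (0 : ℝ) ∈ Icc 0 s := ⟨le_rfl, hs⟩
  have hmems : s ∈ Icc 0 s := ⟨hs, le_rfl⟩
  rcases le_or_gt (H s) 0 with hHs | hHs
  · exact hHs.trans (by positivity)
  have hpos : ∀ τ ∈ Icc 0 s, 0 < H τ := fun τ hτ =>
    hHs.trans_le <| antitoneOn_of_hasDerivWithinAt_le_neg_sq_div (convex_Icc 0 s) hn0.le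
      hderiv hineq hτ hmems hτ.2
  have hgrowth : (H 0)⁻¹ + s / n ≤ (H s)⁻¹ := by
    have := monotoneOn_inv_sub_div_of_hasDerivWithinAt_le_neg_sq_div (convex_Icc 0 s)
      hderiv hpos hineq hmem0 hmems hs
    simp only [zero_div, sub_zero] at this
    linarith
  calc H s = (H s)⁻¹⁻¹ := (inv_inv _).symm
    _ ≤ ((H 0)⁻¹ + s / n)⁻¹ := inv_anti₀ (by positivity) hgrowth
    _ = n * H 0 / (H 0 * s + n) := by field_simp; ring
end

section
/- Let n ≥ 1 be a real number, s ≥ 0, and let H, g : [0, s] → ℝ be differentiable with H(0) > 0, H'(τ) ≤ −H(τ)²/n for all τ ∈ [0, s], g > 0, and g'(τ) = H(τ)·g(τ) for all τ ∈ [0, s]. Then g(s) ≤ ((H(0)·s + n)/n)^n · g(0). -/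
open Set

/-!
The Riccati inequality `H' ≤ -H²/n` is compared with its equality case `B' = -B²/n`,
`B 0 = H 0`, whose solution is `B τ = n H(0) / (H(0) τ + n)`; a fencing argument gives `H ≤ B`.
Now `B` is the logarithmic derivative of `F τ = ((H(0) τ + n)/n)^n`, so `(g / F)' ≤ 0` and
`g s / F s ≤ g 0 / F 0 = g 0`.
-/

noncomputable section

def riccatiSolution (n h τ : ℝ) : ℝ := n * h / (h * τ + n)

def areaFactor (n h τ : ℝ) : ℝ := ((h * τ + n) / n) ^ n

section

variable {n h τ : ℝ}

lemma riccatiSolution_zero (hn : n ≠ 0) : riccatiSolution n h 0 = h := by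
  simp [riccatiSolution, hn]

lemma riccatiSolution_nonneg (hn : 0 < n) (hh : 0 ≤ h) (hτ : 0 ≤ τ) :
    0 ≤ riccatiSolution n h τ := by
  unfold riccatiSolution; positivity

lemma hasDerivAt_riccatiSolution (hden : h * τ + n ≠ 0) :
    HasDerivAt (riccatiSolution n h) (-riccatiSolution n h τ ^ 2 / n) τ := by
  have hlin : HasDerivAt (fun t => h * t + n) h τ := by
    simpa using ((hasDerivAt_id τ).const_mul h).add_const n
  refine ((hasDerivAt_const τ (n * h)).div hlin hden).congr_deriv ?_
  simp only [riccatiSolution]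
  field_simp
  ring

lemma areaFactor_zero (hn : n ≠ 0) : areaFactor n h 0 = 1 := by
  simp [areaFactor, hn]

lemma areaFactor_pos (hn : 0 < n) (hh : 0 ≤ h) (hτ : 0 ≤ τ) : 0 < areaFactor n h τ := by
  unfold areaFactor; positivity

lemma hasDerivAt_areaFactor (hn : 0 < n) (hh : 0 ≤ h) (hτ : 0 ≤ τ) :
    HasDerivAt (areaFactor n h) (riccatiSolution n h τ * areaFactor n h τ) τ := by
  have hbase : 0 < (h * τ + n) / n := by positivity
  have hlin : HasDerivAt (fun t => (h * t + n) / n) (h / n) τ := by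
    simpa using (((hasDerivAt_id τ).const_mul h).add_const n).div_const n
  refine (hlin.rpow_const (p := n) (Or.inl hbase.ne')).congr_deriv ?_
  simp only [areaFactor, riccatiSolution]
  rw [Real.rpow_sub_one hbase.ne']
  field_simp

end

theorem le_riccatiSolution_of_deriv_le {n s : ℝ} (hn : 0 < n) {H H' : ℝ → ℝ}
    (hderiv : ∀ τ ∈ Icc 0 s, HasDerivWithinAt H (H' τ) (Icc 0 s) τ) (h0 : 0 ≤ H 0)
    (hineq : ∀ τ ∈ Icc 0 s, H' τ ≤ -H τ ^ 2 / n) :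
    ∀ τ ∈ Icc 0 s, H τ ≤ riccatiSolution n (H 0) τ := by
  set B := riccatiSolution n (H 0)
  have hB : ∀ τ, 0 ≤ τ → HasDerivAt B (-B τ ^ 2 / n) τ := fun τ hτ =>
    hasDerivAt_riccatiSolution (by positivity)
  intro τ hτ
  -- Where `H` touches `B + ε` we have `H > B ≥ 0`, so `H' ≤ -H²/n < -B²/n = (B + ε)'`.
  refine le_of_forall_pos_le_add fun ε hε => ?_
  refine image_le_of_deriv_right_lt_deriv_boundary' (B := fun t => B t + ε)
    (fun x hx => (hderiv x hx).continuousWithinAt)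
    (fun x hx => (hderiv x (Ico_subset_Icc_self hx)).mono_of_mem_nhdsWithin
      (Icc_mem_nhdsGE_of_mem hx))
    (by simp [B, riccatiSolution_zero hn.ne', hε.le])
    (fun x hx => ((hB x hx.1).continuousAt.add continuousAt_const).continuousWithinAt)
    (fun x hx => ((hB x hx.1).add_const ε).hasDerivWithinAt) ?_ hτ
  intro x hx hHx
  have hBH : B x < H x := by linarith
  have hBsq : B x ^ 2 < H x ^ 2 := by
    nlinarith [riccatiSolution_nonneg hn h0 hx.1]
  calc H' x ≤ -H x ^ 2 / n := hineq x (Ico_subset_Icc_self hx)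
    _ < -B x ^ 2 / n := by gcongr

theorem antitoneOn_div_of_deriv_le_mul {a b : ℝ} {g g' F B : ℝ → ℝ}
    (hg : ∀ x ∈ Icc a b, HasDerivWithinAt g (g' x) (Icc a b) x)
    (hF : ∀ x ∈ Icc a b, HasDerivWithinAt F (B x * F x) (Icc a b) x)
    (hFpos : ∀ x ∈ Icc a b, 0 < F x) (hle : ∀ x ∈ Icc a b, g' x ≤ B x * g x) :
    AntitoneOn (fun x => g x / F x) (Icc a b) := by
  have hquot : ∀ x ∈ Icc a b, HasDerivWithinAt (fun x => g x / F x)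
      ((g' x - B x * g x) / F x) (Icc a b) x := fun x hx =>
    ((hg x hx).div (hF x hx) (hFpos x hx).ne').congr_deriv (by field_simp)
  refine antitoneOn_of_hasDerivWithinAt_nonpos (convex_Icc a b)
    (f' := fun x => (g' x - B x * g x) / F x)
    (fun x hx => (hquot x hx).continuousWithinAt) ?_ ?_ <;> rw [interior_Icc]
  · exact fun x hx => (hquot x (Ioo_subset_Icc_self hx)).mono Ioo_subset_Icc_self
  · intro x hx
    have hx := Ioo_subset_Icc_self hx
    exact div_nonpos_of_nonpos_of_nonneg (sub_nonpos.2 (hle x hx)) (hFpos x hx).le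

end

/-- **Area growth of equidistant hypersurfaces** (from the proof of Lemma 6.2): if `H` is
differentiable on `[0, s]` with `H(0) > 0` and `H' ≤ −H²/n`, and the positive function `g`
satisfies `g' = H·g` on `[0, s]`, then `g(s) ≤ ((H(0)s + n)/n)^n · g(0)`. -/
theorem equidistant_area_growth (n : ℝ) (hn : 1 ≤ n) (s : ℝ) (hs : 0 ≤ s)
    (H H' g g' : ℝ → ℝ)
    (hHderiv : ∀ τ ∈ Icc (0 : ℝ) s, HasDerivWithinAt H (H' τ) (Icc (0 : ℝ) s) τ)
    (h0 : 0 < H 0)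
    (hHineq : ∀ τ ∈ Icc (0 : ℝ) s, H' τ ≤ -(H τ) ^ 2 / n)
    (hgderiv : ∀ τ ∈ Icc (0 : ℝ) s, HasDerivWithinAt g (g' τ) (Icc (0 : ℝ) s) τ)
    (hgpos : ∀ τ ∈ Icc (0 : ℝ) s, 0 < g τ)
    (hgode : ∀ τ ∈ Icc (0 : ℝ) s, g' τ = H τ * g τ) :
    g s ≤ ((H 0 * s + n) / n) ^ n * g 0 := by
  have hn0 : 0 < n := by linarith
  have hHB := le_riccatiSolution_of_deriv_le hn0 hHderiv h0.le hHineq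
  have hgle : ∀ τ ∈ Icc 0 s, g' τ ≤ riccatiSolution n (H 0) τ * g τ := fun τ hτ => by
    rw [hgode τ hτ]
    exact mul_le_mul_of_nonneg_right (hHB τ hτ) (hgpos τ hτ).le
  have hratio : g s / areaFactor n (H 0) s ≤ g 0 / areaFactor n (H 0) 0 :=
    antitoneOn_div_of_deriv_le_mul hgderiv
      (fun τ hτ => (hasDerivAt_areaFactor hn0 h0.le hτ.1).hasDerivWithinAt)
      (fun τ hτ => areaFactor_pos hn0 h0.le hτ.1) hgle ⟨le_rfl, hs⟩ ⟨hs, le_rfl⟩ hs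
  rw [areaFactor_zero hn0.ne', div_one, div_le_iff₀ (areaFactor_pos hn0 h0.le hs)] at hratio
  rwa [mul_comm] at hratio
end

section
/- Let C > 0, set γ := √(C/2), let s ≥ 0 and let H : [0, s] → ℝ be differentiable with H(0) ≥ 0 and H'(τ) ≤ −H(τ)²/2 + C for all τ ∈ [0, s]. Then H(s) ≤ (√(2C)·sinh(γ s) + cosh(γ s)·H(0)) / (cosh(γ s) + (√(2C))^{−1}·sinh(γ s)·H(0)). -/
/-!
With `k = √(2C)` and `γ = √(C/2) = k/2`, the right-hand side is `y = N/D`, where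
`N = k sinh(γt) + cosh(γt) H(0)` and `D = cosh(γt) + k⁻¹ sinh(γt) H(0)` satisfy the linear system
`N' = C D`, `D' = N/2`; hence `y` solves `y' = C - y²/2` with `y(0) = H(0)`, and `y ≥ 0`.
Since `u ↦ C - u²/2` is decreasing on `[0, ∞)`, wherever `H > y` we get `H' ≤ C - H²/2 ≤ y'`,
so `H` can never overtake `y`.
-/

open Set Real

theorem image_le_of_deriv_right_le_deriv_of_lt_image {f f' B B' : ℝ → ℝ} {a b : ℝ}
    (hf : ContinuousOn f (Icc a b)) (hf' : ∀ x ∈ Ico a b, HasDerivWithinAt f (f' x) (Ici x) x)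
    (ha : f a ≤ B a) (hB : ContinuousOn B (Icc a b))
    (hB' : ∀ x ∈ Ico a b, HasDerivWithinAt B (B' x) (Ici x) x)
    (bound : ∀ x ∈ Ico a b, B x < f x → f' x ≤ B' x) : ∀ ⦃x⦄, x ∈ Icc a b → f x ≤ B x := by
  intro x hx
  -- The strict fencing theorem applies to the barrier `B + ε (1 + (t - a))` for every `ε > 0`.
  have hfence : ∀ ε > 0, f x ≤ B x + ε * (1 + (x - a)) := by
    intro ε hε
    have hbarrier : ∀ t ∈ Ico a b, HasDerivWithinAt (fun t => B t + ε * (1 + (t - a)))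
        (B' t + ε) (Ici t) t := fun t ht =>
      ((hB' t ht).add (((hasDerivWithinAt_id t _).sub_const a).const_add 1
        |>.const_mul ε)).congr_deriv (by ring)
    refine image_le_of_deriv_right_lt_deriv_boundary' (B := fun t => B t + ε * (1 + (t - a)))
      hf hf' (by simp; linarith) (hB.add (by fun_prop)) hbarrier (fun t ht hft => ?_) hx
    have hlt : B t < f t := by nlinarith [ht.1]
    linarith [bound t ht hlt]
  refine le_of_forall_pos_le_add fun ε hε => ?_
  have hpos : 0 < 1 + (x - a) := by linarith [hx.1]
  simpa [div_mul_cancel₀ _ hpos.ne'] using hfence (ε / (1 + (x - a))) (by positivity)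

theorem HasDerivAt.div_of_riccati_linearization {N D : ℝ → ℝ} {c t : ℝ}
    (hN : HasDerivAt N (c * D t) t) (hD : HasDerivAt D (N t / 2) t) (hDt : D t ≠ 0) :
    HasDerivAt (fun t => N t / D t) (c - (N t / D t) ^ 2 / 2) t :=
  (hN.div hD hDt).congr_deriv (by field_simp)

noncomputable def riccatiNum (C h₀ t : ℝ) : ℝ :=
  √(2 * C) * sinh (√(C / 2) * t) + cosh (√(C / 2) * t) * h₀

noncomputable def riccatiDen (C h₀ t : ℝ) : ℝ :=
  cosh (√(C / 2) * t) + (√(2 * C))⁻¹ * sinh (√(C / 2) * t) * h₀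

theorem sqrt_two_mul_eq_two_mul_sqrt_div_two (C : ℝ) : √(2 * C) = 2 * √(C / 2) := by
  rw [show C / 2 = 2 * C / 2 ^ 2 by ring, sqrt_div' _ (by positivity), sqrt_sq zero_le_two]
  ring

section
variable {C h₀ t : ℝ}

theorem riccatiNum_zero : riccatiNum C h₀ 0 = h₀ := by simp [riccatiNum]
theorem riccatiDen_zero : riccatiDen C h₀ 0 = 1 := by simp [riccatiDen]

theorem riccatiNum_nonneg (h₀_nonneg : 0 ≤ h₀) (ht : 0 ≤ t) : 0 ≤ riccatiNum C h₀ t := by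
  have := sinh_nonneg_iff.2 (mul_nonneg (sqrt_nonneg (C / 2)) ht)
  unfold riccatiNum; positivity

theorem riccatiDen_pos (h₀_nonneg : 0 ≤ h₀) (ht : 0 ≤ t) : 0 < riccatiDen C h₀ t := by
  have := sinh_nonneg_iff.2 (mul_nonneg (sqrt_nonneg (C / 2)) ht)
  unfold riccatiDen; positivity

theorem hasDerivAt_riccatiNum (hC : 0 ≤ C) :
    HasDerivAt (riccatiNum C h₀) (C * riccatiDen C h₀ t) t := by
  have hγ := (hasDerivAt_id' t).const_mul √(C / 2)
  refine ((hγ.sinh.const_mul _).add (hγ.cosh.mul_const h₀)).congr_deriv ?_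
  have hC2 : C = 2 * √(C / 2) ^ 2 := by rw [sq_sqrt (by positivity)]; ring
  rw [riccatiDen, sqrt_two_mul_eq_two_mul_sqrt_div_two]
  generalize √(C / 2) = γ at hC2 ⊢
  subst hC2
  rcases eq_or_ne γ 0 with rfl | hγ0
  · simp
  · field_simp

theorem hasDerivAt_riccatiDen (hC : 0 < C) :
    HasDerivAt (riccatiDen C h₀) (riccatiNum C h₀ t / 2) t := by
  have hγ := (hasDerivAt_id' t).const_mul √(C / 2)
  refine (hγ.cosh.add ((hγ.sinh.const_mul _).mul_const h₀)).congr_deriv ?_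
  have : √(C / 2) ≠ 0 := (sqrt_pos.2 (by positivity)).ne'
  rw [riccatiNum, sqrt_two_mul_eq_two_mul_sqrt_div_two]
  field_simp

end

/-- **Riccati comparison with a curvature term** (from the proof of Lemma 6.7): if `H` is
differentiable on `[0, s]` with `H(0) ≥ 0` and `H' ≤ −H²/2 + C`, then with `γ = √(C/2)`,
`H(s) ≤ (√(2C) sinh(γs) + cosh(γs) H(0)) / (cosh(γs) + (√(2C))⁻¹ sinh(γs) H(0))`. -/
theorem riccati_comparison_curvature (C : ℝ) (hC : 0 < C) (s : ℝ) (hs : 0 ≤ s)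
    (H H' : ℝ → ℝ)
    (hderiv : ∀ τ ∈ Icc (0 : ℝ) s, HasDerivWithinAt H (H' τ) (Icc (0 : ℝ) s) τ)
    (h0 : 0 ≤ H 0)
    (hineq : ∀ τ ∈ Icc (0 : ℝ) s, H' τ ≤ -(H τ) ^ 2 / 2 + C) :
    H s ≤ (Real.sqrt (2 * C) * Real.sinh (Real.sqrt (C / 2) * s)
            + Real.cosh (Real.sqrt (C / 2) * s) * H 0) /
          (Real.cosh (Real.sqrt (C / 2) * s)
            + (Real.sqrt (2 * C))⁻¹ * Real.sinh (Real.sqrt (C / 2) * s) * H 0) := by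
  set y : ℝ → ℝ := fun t => riccatiNum C (H 0) t / riccatiDen C (H 0) t
  have hy_nonneg : ∀ t, 0 ≤ t → 0 ≤ y t := fun t ht =>
    div_nonneg (riccatiNum_nonneg h0 ht) (riccatiDen_pos h0 ht).le
  have hy_deriv : ∀ t, 0 ≤ t → HasDerivAt y (C - y t ^ 2 / 2) t := fun t ht =>
    (hasDerivAt_riccatiNum hC.le).div_of_riccati_linearization (hasDerivAt_riccatiDen hC)
      (riccatiDen_pos h0 ht).ne'
  have hH_right : ∀ t ∈ Ico 0 s, HasDerivWithinAt H (H' t) (Ici t) t := fun t ht =>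
    (hderiv t (Ico_subset_Icc_self ht)).mono_of_mem_nhdsWithin
      (Filter.mem_of_superset (Icc_mem_nhdsGE ht.2) (Icc_subset_Icc_left ht.1))
  refine image_le_of_deriv_right_le_deriv_of_lt_image (HasDerivWithinAt.continuousOn hderiv)
    hH_right (by simp [y, riccatiNum_zero, riccatiDen_zero])
    (fun t ht => (hy_deriv t ht.1).continuousAt.continuousWithinAt)
    (fun t ht => (hy_deriv t ht.1).hasDerivWithinAt) (fun t ht hyH => ?_) ⟨hs, le_rfl⟩
  nlinarith [hineq t (Ico_subset_Icc_self ht), hy_nonneg t ht.1]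
end

section
/- Let E ⊂ ℝ^{n+1} be a nonempty bounded set, let s > 0, let Γ denote the topological frontier of E, and let L_s denote the topological frontier of the set {x ∈ ℝ^{n+1} : dist(x, E) ≤ s}. For a subset A ⊆ L_s define P(A) := {x ∈ Γ : ∃ y ∈ A with |y − x| = s}. Then for every compact K ⊆ L_s and every η > 0 there exists γ₀ > 0 such that for all γ ∈ (0, γ₀], P({y ∈ ℝ^{n+1} : dist(y, K) < γ} ∩ L_s) ⊆ {x ∈ ℝ^{n+1} : dist(x, P(K)) < η}. -/
open Set Metric

/-- **Footpoint continuity** (Claim 1 in the proof of Lemma 6.2): let `E ⊂ ℝ^{n+1}` be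
nonempty and bounded, `Γ = ∂E`, and `L_s` the frontier of `{dist(·,E) ≤ s}`. For
`A ⊆ L_s` let `P(A) ⊆ Γ` be the set of footpoints realised by points of `A` at distance
exactly `s`. Then for every compact `K ⊆ L_s` and every `η > 0` there is `γ₀ > 0` such
that for all `γ ∈ (0, γ₀]`, `P(K_γ ∩ L_s) ⊆ (P(K))_η` (subscripts denoting open
metric neighbourhoods). -/
theorem footpoint_containment (n : ℕ) (E : Set (EuclideanSpace ℝ (Fin (n + 1))))
    (hne : E.Nonempty) (hbdd : Bornology.IsBounded E) (s : ℝ) (hs : 0 < s)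
    (K : Set (EuclideanSpace ℝ (Fin (n + 1))))
    (hK : K ⊆ frontier {x | infDist x E ≤ s}) (hKc : IsCompact K)
    (η : ℝ) (hη : 0 < η) :
    ∃ γ₀ > (0 : ℝ), ∀ γ : ℝ, 0 < γ → γ ≤ γ₀ →
      {x ∈ frontier E | ∃ y ∈ {y | infDist y K < γ} ∩ frontier {x | infDist x E ≤ s},
          ‖y - x‖ = s}
        ⊆ {x | infDist x {z ∈ frontier E | ∃ y ∈ K, ‖y - z‖ = s} < η} := by
  classical
  rcases K.eq_empty_or_nonempty with rfl | hKne
  · refine ⟨1, one_pos, fun γ _ _ x hx => ?_⟩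
    have : {z ∈ frontier E | ∃ y ∈ (∅ : Set (EuclideanSpace ℝ (Fin (n+1)))), ‖y - z‖ = s} = ∅ := by
      simp
    simp only [this, mem_setOf_eq, infDist_empty]
    exact hη
  -- notation
  set Γ : Set (EuclideanSpace ℝ (Fin (n+1))) := frontier E with hΓdef
  set Ls : Set (EuclideanSpace ℝ (Fin (n+1))) := frontier {x | infDist x E ≤ s} with hLsdef
  set PK : Set (EuclideanSpace ℝ (Fin (n+1))) := {z ∈ Γ | ∃ y ∈ K, ‖y - z‖ = s} with hPKdef
  -- Γ is compact
  have hΓc : IsCompact Γ := by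
    apply Metric.isCompact_of_isClosed_isBounded isClosed_frontier
    exact (hbdd.closure).subset frontier_subset_closure
  -- Ls is compact
  have hLsb : Bornology.IsBounded Ls := by
    have h1 : Ls ⊆ {x | infDist x E ≤ s} := by
      have : IsClosed {x | infDist x E ≤ s} :=
        isClosed_le (continuous_infDist_pt E) continuous_const
      exact frontier_subset_closure.trans this.closure_eq.subset
    obtain ⟨r, hr, hEr⟩ := hbdd.subset_closedBall_lt 0 0
    apply (Metric.isBounded_closedBall (x := (0 : EuclideanSpace ℝ (Fin (n+1)))) (r := r + s + 1)).subset
    intro x hx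
    have hx' : infDist x E ≤ s := h1 hx
    obtain ⟨e, heE, hde⟩ := (infDist_lt_iff hne).1 (show infDist x E < s + 1 by linarith)
    have : dist e 0 ≤ r := by simpa [Metric.mem_closedBall] using hEr heE
    have := dist_triangle x e 0
    simp only [Metric.mem_closedBall]
    linarith
  have hLsc : IsCompact Ls := Metric.isCompact_of_isClosed_isBounded isClosed_frontier hLsb
  -- the bad set
  set Φ : Set (EuclideanSpace ℝ (Fin (n+1)) × EuclideanSpace ℝ (Fin (n+1))) :=
    (Ls ×ˢ Γ) ∩ {p | ‖p.1 - p.2‖ = s ∧ η ≤ infDist p.2 PK} with hΦdef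
  have hΦc : IsCompact Φ := by
    apply (hLsc.prod hΓc).inter_right
    apply IsClosed.inter
    · exact isClosed_eq (by fun_prop) continuous_const
    · exact isClosed_le continuous_const ((continuous_infDist_pt PK).comp continuous_snd)
  set B : Set (EuclideanSpace ℝ (Fin (n+1))) := Prod.fst '' Φ with hBdef
  have hBc : IsCompact B := hΦc.image continuous_fst
  have hdisj : Disjoint K B := by
    rw [Set.disjoint_left]
    rintro y hyK ⟨⟨y', x⟩, ⟨⟨hyLs, hxΓ⟩, hnorm, hfar⟩, rfl⟩
    have hxPK : x ∈ PK := ⟨hxΓ, y', hyK, hnorm⟩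
    have : infDist x PK = 0 := infDist_zero_of_mem hxPK
    rw [this] at hfar
    exact absurd hfar (not_le.2 hη)
  obtain ⟨δ, hδpos, hδdisj⟩ := hdisj.exists_thickenings hKc hBc.isClosed
  refine ⟨δ, hδpos, fun γ hγpos hγle x hx => ?_⟩
  obtain ⟨hxΓ, y, ⟨hyK, hyLs⟩, hyx⟩ := hx
  by_contra hcon
  simp only [mem_setOf_eq, not_lt] at hcon
  have hyB : y ∈ B := ⟨(y, x), ⟨⟨hyLs, hxΓ⟩, hyx, hcon⟩, rfl⟩
  have h1 : y ∈ thickening δ B := self_subset_thickening hδpos B hyB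
  have h2 : y ∈ thickening δ K := by
    have : y ∈ thickening γ K := (mem_thickening_iff_infDist_lt hKne).2 hyK
    exact thickening_mono hγle K this
  exact hδdisj.le_bot ⟨h2, h1⟩
end

section
/- Let (X, μ) be a finite measure space, let U : X → ℝ be measurable, and let S := {t ∈ ℝ : μ({x : U(x) = t}) > 0}. Suppose there exist constants C ≥ 0 and α > 0 such that for all t₁, t₂ ∈ ℝ \ S with t₁ < t₂ one has μ({U > t₁}) − μ({U > t₂}) ≤ C·(t₂ − t₁)^α. Then μ({x : U(x) = t}) = 0 for every t ∈ ℝ, i.e. S is empty. -/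
open MeasureTheory

/-- **Non-fattening from a Hölder estimate** (measure-theoretic core of Lemma 5.4): if
`μ` is a finite measure, `U` is measurable, `S` is the set of atoms of the distribution
of `U`, and `μ({U > t₁}) − μ({U > t₂}) ≤ C(t₂ − t₁)^α` for all `t₁ < t₂` outside `S`,
then every level set of `U` is `μ`-null, i.e. `S = ∅`. -/
theorem non_fattening {X : Type*} [MeasurableSpace X] (μ : Measure X)
    [IsFiniteMeasure μ] (U : X → ℝ) (hU : Measurable U)
    (C α : ℝ) (hC : 0 ≤ C) (hα : 0 < α)
    (hest : ∀ t₁ t₂ : ℝ,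
      t₁ ∉ {t : ℝ | 0 < μ {x | U x = t}} →
      t₂ ∉ {t : ℝ | 0 < μ {x | U x = t}} →
      t₁ < t₂ →
      (μ {x | t₁ < U x}).toReal - (μ {x | t₂ < U x}).toReal ≤ C * (t₂ - t₁) ^ α) :
    ∀ t : ℝ, μ {x | U x = t} = 0 := by
  intro t
  have hScount : Set.Countable {t : ℝ | 0 < μ {x | U x = t}} :=
    Measure.countable_meas_level_set_pos hU
  have hdense : Dense {t : ℝ | 0 < μ {x | U x = t}}ᶜ := hScount.dense_compl ℝ
  have key : ∀ ε > (0:ℝ), (μ {x | U x = t}).toReal ≤ C * ε ^ α := by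
    intro ε hε
    obtain ⟨t₁, ht₁S, ht₁⟩ : ∃ t₁, t₁ ∉ {t : ℝ | 0 < μ {x | U x = t}} ∧ t₁ ∈ Set.Ioo (t - ε/2) t := by
      obtain ⟨t₁, h1, h2⟩ := hdense.exists_mem_open isOpen_Ioo
        (Set.nonempty_Ioo.2 (show t - ε/2 < t by linarith))
      exact ⟨t₁, h1, h2⟩
    obtain ⟨t₂, ht₂S, ht₂⟩ : ∃ t₂, t₂ ∉ {t : ℝ | 0 < μ {x | U x = t}} ∧ t₂ ∈ Set.Ioo t (t + ε/2) := by
      obtain ⟨t₂, h1, h2⟩ := hdense.exists_mem_open isOpen_Ioo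
        (Set.nonempty_Ioo.2 (show t < t + ε/2 by linarith))
      exact ⟨t₂, h1, h2⟩
    have h12 : t₁ < t₂ := ht₁.2.trans ht₂.1
    have hest' := hest t₁ t₂ ht₁S ht₂S h12
    have hdisj : Disjoint {x | t₂ < U x} {x | U x = t} := by
      rw [Set.disjoint_left]
      intro x hx hx'
      simp only [Set.mem_setOf_eq] at hx hx'
      exact absurd (hx'.symm ▸ hx) (not_lt.2 ht₂.1.le)
    have hsub : {x | t₂ < U x} ∪ {x | U x = t} ⊆ {x | t₁ < U x} := by
      rintro x (hx | hx) <;> simp only [Set.mem_setOf_eq] at *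
      · linarith [ht₁.2.trans ht₂.1]
      · linarith [ht₁.2]
    have hm : μ {x | t₂ < U x} + μ {x | U x = t} ≤ μ {x | t₁ < U x} := by
      rw [← measure_union hdisj (hU (measurableSet_singleton t))]
      exact measure_mono hsub
    have h1 : (μ {x | U x = t}).toReal ≤
        (μ {x | t₁ < U x}).toReal - (μ {x | t₂ < U x}).toReal := by
      have := ENNReal.toReal_mono (measure_ne_top μ _) hm
      rw [ENNReal.toReal_add (measure_ne_top μ _) (measure_ne_top μ _)] at this
      linarith
    have h2 : C * (t₂ - t₁) ^ α ≤ C * ε ^ α := by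
      apply mul_le_mul_of_nonneg_left _ hC
      apply Real.rpow_le_rpow (by linarith) (by linarith [ht₁.1, ht₂.2]) hα.le
    linarith
  have hto : (μ {x | U x = t}).toReal = 0 := by
    have htend : Filter.Tendsto (fun ε : ℝ => C * ε ^ α) (nhdsWithin 0 (Set.Ioi 0)) (nhds 0) := by
      have hc : ContinuousAt (fun ε : ℝ => C * ε ^ α) 0 :=
        continuousAt_const.mul (Real.continuousAt_rpow_const 0 α (Or.inr hα.le))
      have := hc.continuousWithinAt (s := Set.Ioi 0)
      simpa [Real.zero_rpow hα.ne'] using this.tendsto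
    have hev : ∀ᶠ ε in nhdsWithin (0:ℝ) (Set.Ioi 0),
        (μ {x | U x = t}).toReal ≤ C * ε ^ α :=
      Filter.eventually_of_mem self_mem_nhdsWithin (fun ε hε => key ε hε)
    have := ge_of_tendsto htend hev
    exact le_antisymm this ENNReal.toReal_nonneg
  exact (ENNReal.toReal_eq_zero_iff _).mp hto |>.resolve_right (measure_ne_top μ _)
end

section
/- Let n ≥ 1 be an integer and let k be a real number with k ≥ n − 1 and k ≥ 0. Let (M, μ) be a finite measure space and H : M → [0, ∞) be measurable with ∫_M H^n dμ ≥ n^n (n+1) ω_{n+1}. Then ∫_M H^k dμ ≤ (1/n) ((n+1) ω_{n+1})^{−1/n} · (μ(M))^{1/n} · ∫_M H^{k+1} dμ. -/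
/-!
Hölder's inequality on `μ` gives `∫ H^k ≤ (∫ H^(k+1))^(k/(k+1)) μ(M)^(1/(k+1))` and
`∫ H^n ≤ (∫ H^(k+1))^(n/(k+1)) μ(M)^(1-n/(k+1))`, the latter because `n ≤ k + 1`.
Multiplying the first by the `1/n`-th power of the second, the exponents of `∫ H^(k+1)` add up
to `1` and those of `μ(M)` to `1/n`. The lower bound on `∫ H^n` then bounds
`(∫ H^n)^(1/n)` below by `(n^n (n+1) ω_{n+1})^(1/n) = n ((n+1) ω_{n+1})^(1/n)`.
-/

open MeasureTheory Metric

theorem lintegral_rpow_le_lintegral_rpow_rpow_mul_measure_univ {α : Type*} [MeasurableSpace α]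
    {μ : Measure α} {f : α → ENNReal} (hf : AEMeasurable f μ) {a b : ℝ} (ha : 0 ≤ a)
    (hab : a ≤ b) :
    ∫⁻ x, f x ^ a ∂μ ≤ (∫⁻ x, f x ^ b ∂μ) ^ (a / b) * μ Set.univ ^ (1 - a / b) := by
  have hab' : 0 ≤ 1 - a / b := sub_nonneg.2 (div_le_one_of_le₀ hab (ha.trans hab))
  have holder := ENNReal.lintegral_mul_norm_pow_le (hf.pow_const b) aemeasurable_const
    (div_nonneg ha (ha.trans hab)) hab' (add_sub_cancel _ _) (μ := μ) (g := fun _ => 1)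
  have hpow (x : α) : (f x ^ b) ^ (a / b) = f x ^ a := by
    rw [← ENNReal.rpow_mul, mul_div_cancel_of_imp' fun hb => by linarith]
  simpa [hpow] using holder

theorem lintegral_rpow_mul_lintegral_rpow_rpow_le {α : Type*} [MeasurableSpace α]
    {μ : Measure α} {f : α → ENNReal} (hf : AEMeasurable f μ) {a p : ℝ} (ha : 0 ≤ a)
    (hp : 0 < p) (hpa : p ≤ a + 1) :
    (∫⁻ x, f x ^ a ∂μ) * (∫⁻ x, f x ^ p ∂μ) ^ (1 / p)
      ≤ (∫⁻ x, f x ^ (a + 1) ∂μ) * μ Set.univ ^ (1 / p) := by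
  set I := ∫⁻ x, f x ^ (a + 1) ∂μ
  set V := μ Set.univ
  have ha1 : 0 < a + 1 := by linarith
  have hA := lintegral_rpow_le_lintegral_rpow_rpow_mul_measure_univ hf ha
    (le_add_of_nonneg_right zero_le_one)
  have hP : (∫⁻ x, f x ^ p ∂μ) ^ (1 / p) ≤ I ^ (1 / (a + 1)) * V ^ ((1 - p / (a + 1)) / p) := by
    have := ENNReal.rpow_le_rpow
      (lintegral_rpow_le_lintegral_rpow_rpow_mul_measure_univ hf hp.le hpa) (one_div_nonneg.2 hp.le)
    rwa [ENNReal.mul_rpow_of_nonneg _ _ (one_div_nonneg.2 hp.le), ← ENNReal.rpow_mul,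
      ← ENNReal.rpow_mul, show p / (a + 1) * (1 / p) = 1 / (a + 1) by field_simp,
      ← div_eq_mul_one_div] at this
  have hnonneg₁ : 0 ≤ 1 - a / (a + 1) := sub_nonneg.2 (div_le_one_of_le₀ (by linarith) ha1.le)
  have hnonneg₂ : 0 ≤ (1 - p / (a + 1)) / p :=
    div_nonneg (sub_nonneg.2 (div_le_one_of_le₀ hpa ha1.le)) hp.le
  calc (∫⁻ x, f x ^ a ∂μ) * (∫⁻ x, f x ^ p ∂μ) ^ (1 / p)
      ≤ (I ^ (a / (a + 1)) * V ^ (1 - a / (a + 1)))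
          * (I ^ (1 / (a + 1)) * V ^ ((1 - p / (a + 1)) / p)) := mul_le_mul' hA hP
    -- all exponents are nonnegative, so no case split on `I` or `V` being `0` or `∞` is needed
    _ = I ^ (a / (a + 1) + 1 / (a + 1)) * V ^ (1 - a / (a + 1) + (1 - p / (a + 1)) / p) := by
      rw [ENNReal.rpow_add_of_nonneg _ _ (div_nonneg ha ha1.le) (one_div_nonneg.2 ha1.le),
        ENNReal.rpow_add_of_nonneg _ _ hnonneg₁ hnonneg₂]
      ring
    _ = I * V ^ (1 / p) := by
      rw [← add_div, div_self ha1.ne', ENNReal.rpow_one]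
      congr 2
      field_simp
      ring

theorem Real.pow_mul_rpow_one_div {n : ℕ} (hn : n ≠ 0) {x c : ℝ} (hx : 0 ≤ x) (hc : 0 ≤ c) :
    (x ^ n * c) ^ (1 / n : ℝ) = x * c ^ (1 / n : ℝ) := by
  rw [Real.mul_rpow (by positivity) hc, one_div, Real.pow_rpow_inv_natCast hx hn]

theorem holder_isoperimetric_step_general (n : ℕ) (hn : 1 ≤ n) (k : ℝ)
    (hk1 : (n : ℝ) - 1 ≤ k)
    {M : Type*} [MeasurableSpace M] (μ : Measure M)
    (H : M → ℝ) (hH : Measurable H) (hHnn : ∀ x, 0 ≤ H x)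
    (hlow : ENNReal.ofReal ((n : ℝ) ^ n * ((n : ℝ) + 1) *
        (volume (ball (0 : EuclideanSpace ℝ (Fin (n + 1))) 1)).toReal)
      ≤ ∫⁻ x, ENNReal.ofReal (H x ^ (n : ℝ)) ∂μ) :
    ∫⁻ x, ENNReal.ofReal (H x ^ k) ∂μ
      ≤ ENNReal.ofReal ((1 / (n : ℝ)) *
            (((n : ℝ) + 1) *
              (volume (ball (0 : EuclideanSpace ℝ (Fin (n + 1))) 1)).toReal) ^ (-(1 : ℝ) / n))
          * (μ Set.univ) ^ ((1 : ℝ) / n)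
          * ∫⁻ x, ENNReal.ofReal (H x ^ (k + 1)) ∂μ := by
  have hn1 : (1 : ℝ) ≤ n := by exact_mod_cast hn
  have hk0 : 0 ≤ k := by linarith
  have hlintegral (p : ℝ) (hp : 0 ≤ p) :
      ∫⁻ x, ENNReal.ofReal (H x ^ p) ∂μ = ∫⁻ x, ENNReal.ofReal (H x) ^ p ∂μ :=
    lintegral_congr fun x => (ENNReal.ofReal_rpow_of_nonneg (hHnn x) hp).symm
  rw [hlintegral n (by positivity), mul_assoc] at hlow
  rw [hlintegral k hk0, hlintegral (k + 1) (by positivity)]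
  set c := ((n : ℝ) + 1) * (volume (ball (0 : EuclideanSpace ℝ (Fin (n + 1))) 1)).toReal
  have hc : 0 < c := mul_pos (by positivity)
    (ENNReal.toReal_pos (measure_ball_pos volume _ one_pos).ne' measure_ball_lt_top.ne)
  have hcoef : 1 / (n : ℝ) * c ^ (-(1 : ℝ) / n) = (((n : ℝ) ^ n * c) ^ (1 / n : ℝ))⁻¹ := by
    rw [Real.pow_mul_rpow_one_div (by omega) (by positivity) hc.le, neg_div, Real.rpow_neg hc.le,
      mul_inv, one_div]
  have key := lintegral_rpow_mul_lintegral_rpow_rpow_le (μ := μ)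
    hH.ennreal_ofReal.aemeasurable hk0 (by positivity : (0 : ℝ) < n)
    (by linarith : (n : ℝ) ≤ k + 1)
  rw [hcoef, ENNReal.ofReal_inv_of_pos (by positivity), ← ENNReal.ofReal_rpow_of_pos (by positivity),
    mul_assoc, ← ENNReal.div_eq_inv_mul, ENNReal.le_div_iff_mul_le (Or.inl (by positivity))
      (Or.inl (ENNReal.rpow_ne_top_of_nonneg (by positivity) ENNReal.ofReal_ne_top)),
    mul_comm (μ Set.univ ^ _)]
  exact le_trans (by gcongr) key

/-- **The key Hölder-inequality step** (from (2.3)–(2.4), the monotonicity of the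
isoperimetric difference): let `n ≥ 1` be an integer, `k ≥ max(n−1, 0)` real, `(M, μ)` a
finite measure space and `H : M → [0,∞)` measurable with
`∫ H^n dμ ≥ n^n (n+1) ω_{n+1}`, where `ω_{n+1}` is the Lebesgue volume of the unit ball
in `ℝ^{n+1}`. Then `∫ H^k dμ ≤ (1/n)((n+1)ω_{n+1})^{−1/n} μ(M)^{1/n} ∫ H^{k+1} dμ`. -/
theorem holder_isoperimetric_step (n : ℕ) (hn : 1 ≤ n) (k : ℝ)
    (hk0 : 0 ≤ k) (hk1 : (n : ℝ) - 1 ≤ k)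
    {M : Type*} [MeasurableSpace M] (μ : Measure M) [IsFiniteMeasure μ]
    (H : M → ℝ) (hH : Measurable H) (hHnn : ∀ x, 0 ≤ H x)
    (hlow : ENNReal.ofReal ((n : ℝ) ^ n * ((n : ℝ) + 1) *
        (volume (ball (0 : EuclideanSpace ℝ (Fin (n + 1))) 1)).toReal)
      ≤ ∫⁻ x, ENNReal.ofReal (H x ^ (n : ℝ)) ∂μ) :
    ∫⁻ x, ENNReal.ofReal (H x ^ k) ∂μ
      ≤ ENNReal.ofReal ((1 / (n : ℝ)) *
            (((n : ℝ) + 1) *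
              (volume (ball (0 : EuclideanSpace ℝ (Fin (n + 1))) 1)).toReal) ^ (-(1 : ℝ) / n))
          * (μ Set.univ) ^ ((1 : ℝ) / n)
          * ∫⁻ x, ENNReal.ofReal (H x ^ (k + 1)) ∂μ :=
  holder_isoperimetric_step_general n hn k hk1 μ H hH hHnn hlow
end
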